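/- Let A be an algebra with a term t Mal'cev modulo F and G. Then for all reflexive admissible relations R, S on A: R + S⁻ ⊆ (F(R) + F(S⁻)) ∘ cl(R ∪ S) ∘ (G(R) + G(S⁻)) ⊆ (F(R) + F(S⁻)) ∘ R ∘ S ∘ (G(R) + G(S⁻)), where T⁻ is the converse of T, + is the join R + S = ⋃ₙ R ∘ₙ S, and cl(X) is the least compatible relation containing X. -/

import Mathlib

structure Signature where
  symbols : Type
  arity : symbols → ℕ

structure UAAlgebra (σ : Signature) where
  carrier : Type
  ops : ∀ s, (Fin (σ.arity s) → carrier) → carrier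

namespace Paper

variable {σ : Signature}

/-- Binary relations on the carrier of an algebra. -/
abbrev Rel (A : UAAlgebra σ) := A.carrier → A.carrier → Prop

/-- A relation is admissible (compatible) if it is preserved by all operations,
i.e. it is a subalgebra of `A × A`. -/
def Compatible (A : UAAlgebra σ) (R : Rel A) : Prop :=
  ∀ s (f g : Fin (σ.arity s) → A.carrier),
    (∀ j, R (f j) (g j)) → R (A.ops s f) (A.ops s g)

/-- Reflexive and admissible. -/
def RAdm (A : UAAlgebra σ) (R : Rel A) : Prop :=
  Reflexive R ∧ Compatible A R

/-- Relational composition. -/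
def comp {A : UAAlgebra σ} (R S : Rel A) : Rel A :=
  fun a c => ∃ b, R a b ∧ S b c

/-- `cl A X` : the least compatible relation containing `X`. -/
def cl (A : UAAlgebra σ) (X : Rel A) : Rel A :=
  fun a b => ∀ S : Rel A, Compatible A S → (∀ x y, X x y → S x y) → S a b

/-- The least reflexive compatible relation containing `X`. -/
def clRefl (A : UAAlgebra σ) (X : Rel A) : Rel A :=
  fun a b => ∀ S : Rel A, Reflexive S → Compatible A S → (∀ x y, X x y → S x y) → S a b

/-- `altComp R S n` is `R ∘ₙ S`, the alternating composition
`R ∘ S ∘ R ∘ ⋯` with `n` factors (`n - 1` occurrences of `∘`);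
by convention `R ∘₀ S` is the identity relation. -/
def altComp {A : UAAlgebra σ} (R S : Rel A) : ℕ → Rel A
  | 0 => Eq
  | n + 1 => comp R (altComp S R n)

/-- `relPow R n = Rⁿ`, with `R⁰` the identity relation. -/
def relPow {A : UAAlgebra σ} (R : Rel A) : ℕ → Rel A
  | 0 => Eq
  | n + 1 => comp R (relPow R n)

/-- The join `R + S = ⋃ₙ R ∘ₙ S`. -/
def join {A : UAAlgebra σ} (R S : Rel A) : Rel A :=
  fun a b => ∃ n, altComp R S n a b

/-- Converse relation `R⁻`. -/
def conv {A : UAAlgebra σ} (R : Rel A) : Rel A :=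
  fun a b => R b a

/-- Composition of a finite list of relations (empty list gives the identity). -/
def compList {A : UAAlgebra σ} : List (Rel A) → Rel A
  | [] => Eq
  | r :: l => comp r (compList l)

/-- Join of a family of relations: the union of all finite compositions of members. -/
def joinFam {A : UAAlgebra σ} {ι : Type} (R : ι → Rel A) : Rel A :=
  fun a b => ∃ l : List ι, compList (l.map R) a b

/-- The smallest congruence containing `X`. -/
def cg (A : UAAlgebra σ) (X : Rel A) : Rel A :=
  fun a b => ∀ S : Rel A, Equivalence S → Compatible A S →
    (∀ x y, X x y → S x y) → S a b

/-- Terms of the signature `σ` in `n` variables. -/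
inductive Term (σ : Signature) (n : ℕ) : Type
  | var : Fin n → Term σ n
  | op : ∀ s, (Fin (σ.arity s) → Term σ n) → Term σ n

/-- Evaluation of a term in an algebra under an environment. -/
def Term.eval {n : ℕ} (A : UAAlgebra σ) (env : Fin n → A.carrier) : Term σ n → A.carrier
  | .var k => env k
  | .op s args => A.ops s fun j => (args j).eval A env

/-- The ternary term operation induced by a ternary term. -/
def tApp (A : UAAlgebra σ) (t : Term σ 3) (a b c : A.carrier) : A.carrier :=
  t.eval A ![a, b, c]

/-- `t` is Mal'cev modulo `F` and `G`: whenever `a R b` with `R` reflexive admissible,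
`a F(R) t(a,b,b)` and `t(a,a,b) G(R) b`. -/
def MalcevMod (A : UAAlgebra σ) (F G : Rel A → Rel A) (t : Term σ 3) : Prop :=
  ∀ R : Rel A, RAdm A R → ∀ a b : A.carrier, R a b →
    F R a (tApp A t a b b) ∧ G R (tApp A t a a b) b

end Paper

open Paper

/-!
Write `Φ = F(R) + F(S⁻)`, `X = cl(R ∪ S)`, `Γ = G(R) + G(S⁻)` and `T = Φ ∘ X ∘ Γ`. Both `R` and
`S⁻` lie in `T`: an edge `a S⁻ c` is sandwiched as `a Φ t(a,c,c) X t(a,a,c) Γ c`. For longer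
`R ∪ S⁻`-paths `p → q → ⋯ → r → s`, the three shorter subpaths give `T`-witnesses `(uᵢ, vᵢ)` for
`(p, r)`, `(q, r)`, `(q, s)`, and `(t(u₁,u₂,u₃), t(v₁,v₂,v₃))` witnesses `T(p, s)`, because
`p Φ t(p,q,q) Φ t(u₁,u₂,u₃)` and `t(v₁,v₂,v₃) Γ t(r,r,s) Γ s`. The second inclusion holds since
`R ∘ S` is compatible and contains `R ∪ S`.
-/

namespace Paper

variable {σ : Signature} {A : UAAlgebra σ}

theorem Compatible.termEval {W : Rel A} (hW : Compatible A W) {n : ℕ} (u : Term σ n)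
    {e₁ e₂ : Fin n → A.carrier} (h : ∀ i, W (e₁ i) (e₂ i)) :
    W (u.eval A e₁) (u.eval A e₂) := by
  induction u with
  | var k => exact h k
  | op s args ih => exact hW s _ _ ih

theorem Compatible.tApp {W : Rel A} (hW : Compatible A W) (t : Term σ 3)
    {a a' b b' c c' : A.carrier} (ha : W a a') (hb : W b b') (hc : W c c') :
    W (tApp A t a b c) (tApp A t a' b' c') :=
  hW.termEval t fun i => by fin_cases i <;> assumption

theorem Compatible.comp {P Q : Rel A} (hP : Compatible A P) (hQ : Compatible A Q) :
    Compatible A (comp P Q) := by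
  intro s f g h
  choose m hfm hmg using h
  exact ⟨A.ops s m, hP s f m hfm, hQ s m g hmg⟩

theorem RAdm.conv {S : Rel A} (hS : RAdm A S) : RAdm A (conv S) :=
  ⟨fun a => hS.1 a, fun s f g h => hS.2 s g f h⟩

theorem compatible_cl (X : Rel A) : Compatible A (cl A X) :=
  fun s f g h W hW hX => hW s f g fun j => h j W hW hX

theorem cl_of {X : Rel A} {u v : A.carrier} (h : X u v) : cl A X u v :=
  fun _ _ hX => hX u v h

theorem cl_le {X W : Rel A} (hW : Compatible A W) (hXW : ∀ u v, X u v → W u v) {u v : A.carrier}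
    (h : cl A X u v) : W u v :=
  h W hW hXW

section Join

variable {P Q : Rel A}

theorem Compatible.altComp (hP : Compatible A P) (hQ : Compatible A Q) (n : ℕ) :
    Compatible A (altComp P Q n) := by
  induction n generalizing P Q with
  | zero => exact fun s f g h => congrArg (A.ops s) (funext h)
  | succ n ih => exact hP.comp (ih hQ hP)

theorem altComp_succ_of_altComp (hP : ∀ a, P a a) (hQ : ∀ a, Q a a) {n : ℕ} {a b : A.carrier}
    (h : altComp P Q n a b) : altComp P Q (n + 1) a b := by
  induction n generalizing P Q a with
  | zero => exact ⟨a, hP a, h⟩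
  | succ n ih =>
    obtain ⟨y, hay, hyb⟩ := h
    exact ⟨y, hay, ih hQ hP hyb⟩

theorem altComp_mono (hP : ∀ a, P a a) (hQ : ∀ a, Q a a) {m n : ℕ} (hmn : m ≤ n)
    {a b : A.carrier} (h : altComp P Q m a b) : altComp P Q n a b := by
  induction hmn with
  | refl => exact h
  | step _ ih => exact altComp_succ_of_altComp hP hQ ih

theorem join_refl (a : A.carrier) : join P Q a a := ⟨0, rfl⟩

theorem join_of_left {a b : A.carrier} (h : P a b) : join P Q a b := ⟨1, b, h, rfl⟩

theorem join_of_right (hP : ∀ a, P a a) {a b : A.carrier} (h : Q a b) : join P Q a b :=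
  ⟨2, a, hP a, b, h, rfl⟩

theorem join_trans_of_altComp (hP : ∀ a, P a a) (hQ : ∀ a, Q a a) {n : ℕ} {a b c : A.carrier}
    (hab : altComp P Q n a b) (hbc : join P Q b c) : join P Q a c := by
  induction n generalizing P Q a with
  | zero => exact hab ▸ hbc
  | succ n ih =>
    obtain ⟨y, hay, hyb⟩ := hab
    obtain ⟨m, hm⟩ := hbc
    obtain ⟨k, hk⟩ := ih hQ hP hyb ⟨m + 1, b, hQ b, hm⟩
    exact ⟨k + 1, y, hay, hk⟩

theorem join_trans (hP : ∀ a, P a a) (hQ : ∀ a, Q a a) {a b c : A.carrier}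
    (hab : join P Q a b) (hbc : join P Q b c) : join P Q a c :=
  join_trans_of_altComp hP hQ hab.choose_spec hbc

theorem RAdm.compatible_join (hP : RAdm A P) (hQ : RAdm A Q) : Compatible A (join P Q) := by
  intro s f g h
  choose n hn using h
  refine ⟨Finset.univ.sup n, hP.2.altComp hQ.2 _ s f g fun j => ?_⟩
  exact altComp_mono hP.1 hQ.1 (Finset.le_sup (Finset.mem_univ j)) (hn j)

end Join

theorem relPow_succ_cases_tail {E : Rel A} {n : ℕ} {a c : A.carrier} (h : relPow E (n + 1) a c) :
    ∃ b, relPow E n a b ∧ E b c := by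
  induction n generalizing a with
  | zero => obtain ⟨b, hab, rfl⟩ := h; exact ⟨a, rfl, hab⟩
  | succ n ih =>
    obtain ⟨y, hay, hyc⟩ := h
    obtain ⟨b, hyb, hbc⟩ := ih hyc
    exact ⟨b, ⟨y, hay, hyb⟩, hbc⟩

theorem relPow_of_altComp {P Q E : Rel A} (hP : ∀ u v, P u v → E u v)
    (hQ : ∀ u v, Q u v → E u v) {n : ℕ} {a c : A.carrier} (h : altComp P Q n a c) :
    relPow E n a c := by
  induction n generalizing P Q a with
  | zero => exact h
  | succ n ih =>
    obtain ⟨y, hay, hyc⟩ := h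
    exact ⟨y, hP _ _ hay, ih hQ hP hyc⟩

section Sandwich

variable {Φ X Γ : Rel A}

theorem comp_comp_of_square (hΦ : Compatible A Φ) (hΦt : ∀ a b c, Φ a b → Φ b c → Φ a c)
    (hX : Compatible A X) (hΓ : Compatible A Γ) (hΓt : ∀ a b c, Γ a b → Γ b c → Γ a c)
    (t : Term σ 3) {p q r s : A.carrier} (hp : Φ p (tApp A t p q q))
    (hs : Γ (tApp A t r r s) s) (hpr : comp Φ (comp X Γ) p r) (hqr : comp Φ (comp X Γ) q r)
    (hqs : comp Φ (comp X Γ) q s) : comp Φ (comp X Γ) p s := by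
  obtain ⟨u₁, hpu₁, v₁, huv₁, hvr₁⟩ := hpr
  obtain ⟨u₂, hqu₂, v₂, huv₂, hvr₂⟩ := hqr
  obtain ⟨u₃, hqu₃, v₃, huv₃, hvs₃⟩ := hqs
  exact ⟨tApp A t u₁ u₂ u₃, hΦt _ _ _ hp (hΦ.tApp t hpu₁ hqu₂ hqu₃),
    tApp A t v₁ v₂ v₃, hX.tApp t huv₁ huv₂ huv₃, hΓt _ _ _ (hΓ.tApp t hvr₁ hvr₂ hvs₃) hs⟩

theorem comp_comp_of_relPow (hΦ : Compatible A Φ) (hΦt : ∀ a b c, Φ a b → Φ b c → Φ a c)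
    (hX : Compatible A X) (hΓ : Compatible A Γ) (hΓt : ∀ a b c, Γ a b → Γ b c → Γ a c)
    (t : Term σ 3) {E : Rel A} (hT : ∀ a, comp Φ (comp X Γ) a a)
    (hE : ∀ a b, E a b → comp Φ (comp X Γ) a b)
    (hEΦ : ∀ a b, E a b → Φ a (tApp A t a b b)) (hEΓ : ∀ a b, E a b → Γ (tApp A t a a b) b) :
    ∀ {n : ℕ} {a c : A.carrier}, relPow E n a c → comp Φ (comp X Γ) a c
  | 0, a, _, rfl => hT a
  | 1, a, _, ⟨_, hab, rfl⟩ => hE a _ hab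
  | n + 2, a, c, ⟨q, haq, hqc⟩ => by
    obtain ⟨r, hqr, hrc⟩ := relPow_succ_cases_tail hqc
    have ih {m : ℕ} {a c : A.carrier} (h : relPow E m a c) (_ : m < n + 2) :
        comp Φ (comp X Γ) a c :=
      comp_comp_of_relPow hΦ hΦt hX hΓ hΓt t hT hE hEΦ hEΓ h
    exact comp_comp_of_square hΦ hΦt hX hΓ hΓt t (hEΦ a q haq) (hEΓ r c hrc)
      (ih (m := n + 1) ⟨q, haq, hqr⟩ (by omega)) (ih hqr (by omega)) (ih hqc (by omega))

end Sandwich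

section Malcev

variable {F G : Rel A → Rel A} {t : Term σ 3} {R S : Rel A}

theorem MalcevMod.join_left_of_edge (ht : MalcevMod A F G t) (hF : ∀ R, RAdm A R → RAdm A (F R))
    (hR : RAdm A R) (hS : RAdm A S) {a b : A.carrier} (h : R a b ∨ conv S a b) :
    join (F R) (F (conv S)) a (tApp A t a b b) :=
  h.elim (fun h => join_of_left (ht R hR a b h).1)
    fun h => join_of_right (hF R hR).1 (ht _ hS.conv a b h).1

theorem MalcevMod.join_right_of_edge (ht : MalcevMod A F G t) (hG : ∀ R, RAdm A R → RAdm A (G R))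
    (hR : RAdm A R) (hS : RAdm A S) {a b : A.carrier} (h : R a b ∨ conv S a b) :
    join (G R) (G (conv S)) (tApp A t a a b) b :=
  h.elim (fun h => join_of_left (ht R hR a b h).2)
    fun h => join_of_right (hG R hR).1 (ht _ hS.conv a b h).2

theorem MalcevMod.comp_comp_of_edge (ht : MalcevMod A F G t)
    (hF : ∀ R, RAdm A R → RAdm A (F R)) (hG : ∀ R, RAdm A R → RAdm A (G R))
    (hR : RAdm A R) (hS : RAdm A S) {a b : A.carrier} (h : R a b ∨ conv S a b) :
    comp (join (F R) (F (conv S)))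
      (comp (cl A (fun u v => R u v ∨ S u v)) (join (G R) (G (conv S)))) a b := by
  rcases h with hab | hba
  · exact ⟨a, join_refl a, b, cl_of (Or.inl hab), join_refl b⟩
  · refine ⟨_, ht.join_left_of_edge hF hR hS (Or.inr hba), _,
      (compatible_cl _).tApp t ?_ ?_ ?_, ht.join_right_of_edge hG hR hS (Or.inr hba)⟩
    exacts [cl_of (Or.inl (hR.1 a)), cl_of (Or.inr hba), cl_of (Or.inl (hR.1 b))]

end Malcev

end Paper

/-- Theorem 1(x): `R + S⁻ ⊆ (F(R)+F(S⁻)) ∘ cl(R ∪ S) ∘ (G(R)+G(S⁻))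
⊆ (F(R)+F(S⁻)) ∘ R ∘ S ∘ (G(R)+G(S⁻))`. -/
theorem stmt9 {σ : Signature} (A : UAAlgebra σ) (F G : Rel A → Rel A)
    (hF : ∀ R, RAdm A R → RAdm A (F R)) (hG : ∀ R, RAdm A R → RAdm A (G R))
    (t : Term σ 3) (ht : MalcevMod A F G t)
    (R S : Rel A) (hR : RAdm A R) (hS : RAdm A S) :
    (∀ a c, join R (conv S) a c →
        comp (join (F R) (F (conv S)))
          (comp (cl A (fun u v => R u v ∨ S u v)) (join (G R) (G (conv S)))) a c) ∧
    (∀ a c, comp (join (F R) (F (conv S)))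
          (comp (cl A (fun u v => R u v ∨ S u v)) (join (G R) (G (conv S)))) a c →
        comp (join (F R) (F (conv S))) (comp R (comp S (join (G R) (G (conv S))))) a c) := by
  have hFR := hF R hR
  have hFS := hF _ hS.conv
  have hGR := hG R hR
  have hGS := hG _ hS.conv
  constructor
  · rintro a c ⟨n, hn⟩
    exact comp_comp_of_relPow (hFR.compatible_join hFS) (fun _ _ _ => join_trans hFR.1 hFS.1)
      (compatible_cl _) (hGR.compatible_join hGS) (fun _ _ _ => join_trans hGR.1 hGS.1) t
      (fun a => ⟨a, join_refl a, a, cl_of (Or.inl (hR.1 a)), join_refl a⟩)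
      (fun _ _ => ht.comp_comp_of_edge hF hG hR hS) (fun _ _ => ht.join_left_of_edge hF hR hS)
      (fun _ _ => ht.join_right_of_edge hG hR hS) (relPow_of_altComp (fun _ _ => Or.inl)
        (fun _ _ => Or.inr) hn)
  · rintro a c ⟨u, hau, v, huv, hvc⟩
    obtain ⟨w, huw, hwv⟩ := cl_le (hR.2.comp hS.2)
      (fun u v h => h.elim (fun h => ⟨v, h, hS.1 v⟩) fun h => ⟨u, hR.1 u, h⟩) huv
    exact ⟨u, hau, w, huw, v, hwv, hvc⟩
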